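/- Lemma 5.3 (decay of mollified density and tail): Let π be a finite Borel measure on [0,∞) with ∫₀^∞ x dπ(x) < ∞ and fix ε > 0. Define f^{π,ε}(x) := ∫₀^∞ G_ε(x,y) dπ(y) and F^{π,ε}(x) := ∫_x^∞ f^{π,ε}(z) dz. Then both f^{π,ε}(x) and F^{π,ε}(x) are o(1/x) as x → ∞, i.e. x·f^{π,ε}(x) → 0 and x·F^{π,ε}(x) → 0 as x → ∞. -/

import Mathlib

/-!
Both quantities have the form `x ↦ ∫ (h (x - y) - h (x + y)) dπ(y)` with `h ≥ 0` bounded,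
nonincreasing on `[0, ∞)` and `h x = o(1/x)`: for the density `h = p_ε`, and for the tail, after
Fubini, `h a = ℙ(N(0, ε) ≥ a)`. Split the `π`-integral at `y = x/2`: for `y ≤ x/2` the integrand
is at most `h (x/2)`, while the remaining mass `π [x/2, ∞)` is `o(1/x)` by Markov's inequality
applied to the tail of the finite first moment.
-/

open MeasureTheory Set Filter Topology

/-- The Gaussian kernel `p_ε(x) = (2πε)^{-1/2} exp(-x²/(2ε))`. -/
noncomputable def pker (ε x : ℝ) : ℝ :=
  (Real.sqrt (2 * Real.pi * ε))⁻¹ * Real.exp (-(x ^ 2) / (2 * ε))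

/-- The Dirichlet heat kernel on the half-line `G_ε(x,y) = p_ε(x-y) - p_ε(x+y)`. -/
noncomputable def Gker (ε x y : ℝ) : ℝ := pker ε (x - y) - pker ε (x + y)

open ProbabilityTheory

theorem tendsto_setIntegral_Ici_atTop {μ : Measure ℝ} {f : ℝ → ℝ} (hf : Integrable f μ) :
    Tendsto (fun x => ∫ y in Ici x, f y ∂μ) atTop (𝓝 0) := by
  have hempty : ⋂ x : ℝ, Ici x = ∅ :=
    eq_empty_of_forall_notMem fun y hy => not_le.2 (lt_add_one y) (mem_iInter.1 hy (y + 1))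
  simpa [hempty] using tendsto_setIntegral_of_antitone (fun _ => measurableSet_Ici)
    (fun _ _ hab => Ici_subset_Ici.2 hab) ⟨0, hf.integrableOn⟩

theorem tendsto_mul_measureReal_Ici_atTop (μ : Measure ℝ) [IsFiniteMeasure μ]
    (hμ : Integrable (fun y => y) μ) :
    Tendsto (fun x => x * μ.real (Ici x)) atTop (𝓝 0) := by
  refine squeeze_zero' (eventually_ge_atTop 0 |>.mono fun x hx => by positivity)
    (eventually_ge_atTop 0 |>.mono fun x hx => ?_) (tendsto_setIntegral_Ici_atTop hμ)
  calc x * μ.real (Ici x) = ∫ _ in Ici x, x ∂μ := by rw [setIntegral_const, smul_eq_mul, mul_comm]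
    _ ≤ ∫ y in Ici x, y ∂μ :=
      setIntegral_mono_on (integrableOn_const (measure_ne_top μ _)) hμ.integrableOn
        measurableSet_Ici fun y hy => hy

-- By translation invariance the inner integral `∫ ‖g (z + c y)‖ dz` does not depend on `y`.
theorem integrable_prod_comp_add_mul {g : ℝ → ℝ} (hg : Integrable g) (hgc : Continuous g)
    (μ : Measure ℝ) [IsFiniteMeasure μ] (c : ℝ) :
    Integrable (fun p : ℝ × ℝ => g (p.1 + c * p.2)) (volume.prod μ) := by
  have hcont : Continuous fun p : ℝ × ℝ => g (p.1 + c * p.2) := by fun_prop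
  rw [integrable_prod_iff' hcont.aestronglyMeasurable]
  refine ⟨ae_of_all _ fun y => hg.comp_add_right (c * y), ?_⟩
  simp_rw [integral_add_right_eq_self (fun z => ‖g z‖)]
  exact integrable_const _

section KernelDifference

variable {h : ℝ → ℝ} {C : ℝ}

theorem norm_sub_comp_add_le (hnonneg : ∀ x, 0 ≤ h x) (hle : ∀ x, h x ≤ C)
    (hanti : AntitoneOn h (Ici 0)) {x y : ℝ} (hy : 0 ≤ y) :
    ‖h (x - y) - h (x + y)‖ ≤ h (x / 2) + (Ici (x / 2)).indicator (fun _ => C) y := by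
  by_cases hyx : y ∈ Ici (x / 2)
  · rw [indicator_of_mem hyx, Real.norm_eq_abs, abs_le]
    constructor <;> linarith [hnonneg (x - y), hnonneg (x + y), hle (x - y), hle (x + y),
      hnonneg (x / 2)]
  · rw [indicator_of_notMem hyx, add_zero]
    have hyx : y < x / 2 := by simpa using hyx
    have hsum : h (x + y) ≤ h (x - y) :=
      hanti (mem_Ici.2 (by linarith)) (mem_Ici.2 (by linarith)) (by linarith)
    have hdiff : h (x - y) ≤ h (x / 2) :=
      hanti (mem_Ici.2 (by linarith)) (mem_Ici.2 (by linarith)) (by linarith)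
    rw [Real.norm_eq_abs, abs_of_nonneg (by linarith)]
    linarith [hnonneg (x + y)]

theorem norm_integral_sub_comp_add_le (π : Measure ℝ) [IsFiniteMeasure π]
    (hπ : ∀ᵐ y ∂π, 0 ≤ y) (hnonneg : ∀ x, 0 ≤ h x) (hle : ∀ x, h x ≤ C)
    (hanti : AntitoneOn h (Ici 0)) (x : ℝ) :
    ‖∫ y, (h (x - y) - h (x + y)) ∂π‖ ≤
      π.real univ * h (x / 2) + π.real (Ici (x / 2)) * C := by
  have hC : Integrable ((Ici (x / 2)).indicator fun _ => C) π :=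
    (integrable_const C).indicator measurableSet_Ici
  calc ‖∫ y, (h (x - y) - h (x + y)) ∂π‖
      ≤ ∫ y, (h (x / 2) + (Ici (x / 2)).indicator (fun _ => C) y) ∂π :=
        norm_integral_le_of_norm_le ((integrable_const _).add hC)
          (hπ.mono fun y hy => norm_sub_comp_add_le hnonneg hle hanti hy)
    _ = π.real univ * h (x / 2) + π.real (Ici (x / 2)) * C := by
        rw [integral_add (integrable_const _) hC, integral_const,
          integral_indicator_const _ measurableSet_Ici, smul_eq_mul, smul_eq_mul]

theorem tendsto_mul_integral_sub_comp_add_atTop (π : Measure ℝ) [IsFiniteMeasure π]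
    (hπ : ∀ᵐ y ∂π, 0 ≤ y) (hmom : Integrable (fun y => y) π)
    (hnonneg : ∀ x, 0 ≤ h x) (hle : ∀ x, h x ≤ C) (hanti : AntitoneOn h (Ici 0))
    (hdecay : Tendsto (fun x => x * h x) atTop (𝓝 0)) :
    Tendsto (fun x => x * ∫ y, (h (x - y) - h (x + y)) ∂π) atTop (𝓝 0) := by
  have hhalf : Tendsto (fun x : ℝ => x / 2) atTop atTop := tendsto_id.atTop_div_const two_pos
  have hdecay_half : Tendsto (fun x => x * h (x / 2)) atTop (𝓝 0) := by
    have h2 := (hdecay.comp hhalf).const_mul 2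
    rw [mul_zero] at h2
    exact h2.congr fun x => by simp only [Function.comp_apply]; ring
  have hmass := (tendsto_mul_measureReal_Ici_atTop π hmom).comp hhalf
  have hlim := (hdecay_half.const_mul (π.real univ)).add (hmass.const_mul (2 * C))
  simp only [mul_zero, add_zero] at hlim
  refine squeeze_zero_norm' (eventually_ge_atTop 0 |>.mono fun x hx => ?_) hlim
  rw [norm_mul, Real.norm_of_nonneg hx]
  calc x * ‖∫ y, (h (x - y) - h (x + y)) ∂π‖
      ≤ x * (π.real univ * h (x / 2) + π.real (Ici (x / 2)) * C) := by
        gcongr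
        exact norm_integral_sub_comp_add_le π hπ hnonneg hle hanti x
    _ = _ := by simp only [Function.comp_apply]; ring

end KernelDifference

theorem pker_eq_gaussianPDFReal {ε : ℝ} (hε : 0 ≤ ε) :
    pker ε = gaussianPDFReal 0 ε.toNNReal := by
  ext x
  simp [pker, gaussianPDFReal, Real.coe_toNNReal _ hε]

theorem pker_nonneg (ε x : ℝ) : 0 ≤ pker ε x := by
  unfold pker; positivity

theorem continuous_pker (ε : ℝ) : Continuous (pker ε) := by
  unfold pker; fun_prop

theorem integrable_pker {ε : ℝ} (hε : 0 ≤ ε) : Integrable (pker ε) := by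
  rw [pker_eq_gaussianPDFReal hε]
  exact integrable_gaussianPDFReal _ _

theorem pker_le_inv_sqrt (ε x : ℝ) : pker ε x ≤ (Real.sqrt (2 * Real.pi * ε))⁻¹ := by
  rcases le_or_gt ε 0 with hε | hε
  · simp [pker, Real.sqrt_eq_zero'.2 (by nlinarith [Real.pi_pos] : 2 * Real.pi * ε ≤ 0)]
  · unfold pker
    refine mul_le_of_le_one_right (by positivity) (Real.exp_le_one_iff.2 ?_)
    exact div_nonpos_of_nonpos_of_nonneg (by nlinarith [sq_nonneg x]) (by positivity)

theorem antitoneOn_pker {ε : ℝ} (hε : 0 ≤ ε) : AntitoneOn (pker ε) (Ici 0) := by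
  intro u hu v hv huv
  unfold pker
  gcongr

theorem tendsto_mul_pker_atTop {ε : ℝ} (hε : 0 < ε) :
    Tendsto (fun x => x * pker ε x) atTop (𝓝 0) := by
  have h := ((tendsto_rpow_abs_mul_exp_neg_mul_sq_cocompact (inv_pos.2 (by positivity : 0 < 2 * ε))
    1).mono_left atTop_le_cocompact).const_mul (Real.sqrt (2 * Real.pi * ε))⁻¹
  rw [mul_zero] at h
  refine h.congr' (eventually_ge_atTop 0 |>.mono fun x hx => ?_)
  rw [abs_of_nonneg hx, Real.rpow_one]
  unfold pker
  field_simp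

theorem setIntegral_Ici_pker_sub {ε : ℝ} (hε : 0 < ε) (a y : ℝ) :
    ∫ z in Ici a, pker ε (z - y) = (gaussianReal 0 ε.toNNReal).real (Ici (a - y)) := by
  have hv : ε.toNNReal ≠ 0 := (Real.toNNReal_pos.2 hε).ne'
  simp_rw [pker_eq_gaussianPDFReal hε.le, gaussianPDFReal_sub, zero_add]
  rw [← preimage_add_const_Ici, ← map_measureReal_apply (measurable_add_const y) measurableSet_Ici,
    gaussianReal_map_add_const, zero_add, measureReal_def, gaussianReal_apply_eq_integral _ hv,
    ENNReal.toReal_ofReal (setIntegral_nonneg measurableSet_Ici fun _ _ =>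
      gaussianPDFReal_nonneg _ _ _)]

theorem integral_Ici_integral_Gker {ε : ℝ} (hε : 0 < ε) (π : Measure ℝ) [IsFiniteMeasure π]
    (x : ℝ) :
    ∫ z in Ici x, ∫ y, Gker ε z y ∂π = ∫ y, ((gaussianReal 0 ε.toNNReal).real (Ici (x - y)) -
      (gaussianReal 0 ε.toNNReal).real (Ici (x + y))) ∂π := by
  have hint : ∀ c, Integrable (fun p : ℝ × ℝ => pker ε (p.1 + c * p.2))
      ((volume.restrict (Ici x)).prod π) := fun c => by
    have h := (integrable_prod_comp_add_mul (integrable_pker hε.le) (continuous_pker ε) π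
      c).restrict (s := Ici x ×ˢ univ)
    rwa [← Measure.prod_restrict, Measure.restrict_univ] at h
  have hG : Integrable (Function.uncurry fun z y => Gker ε z y)
      ((volume.restrict (Ici x)).prod π) := by
    refine ((hint (-1)).sub (hint 1)).congr (ae_of_all _ fun ⟨z, y⟩ => ?_)
    simp [Gker, sub_eq_add_neg]
  rw [integral_integral_swap hG]
  refine integral_congr_ae (ae_of_all _ fun y => ?_)
  have hadd := setIntegral_Ici_pker_sub hε x (-y)
  simp only [sub_neg_eq_add] at hadd
  simp only [Gker]
  rw [integral_sub ((integrable_pker hε.le).comp_sub_right y).integrableOn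
    ((integrable_pker hε.le).comp_add_right y).integrableOn, setIntegral_Ici_pker_sub hε, hadd]

/-- Lemma 5.3 (decay of mollified density and tail): if `π` is a finite Borel
measure on `[0,∞)` with finite first moment and `ε > 0`, then both
`f^{π,ε}(x) = ∫₀^∞ G_ε(x,y) dπ(y)` and its tail integral
`F^{π,ε}(x) = ∫_x^∞ f^{π,ε}(z) dz` are `o(1/x)` as `x → ∞`. -/
theorem mollified_density_and_tail_decay
    (π : Measure ℝ) [IsFiniteMeasure π] (hsupp : π (Iio 0) = 0)
    (hmom : Integrable (fun x => x) π) (ε : ℝ) (hε : 0 < ε) :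
    Tendsto (fun x => x * ∫ y, Gker ε x y ∂π) atTop (𝓝 0) ∧
    Tendsto (fun x => x * ∫ z in Ici x, ∫ y, Gker ε z y ∂π) atTop (𝓝 0) := by
  have hπ : ∀ᵐ y ∂π, 0 ≤ y := by
    rw [ae_iff]
    simp only [not_le]
    exact hsupp
  set ν := gaussianReal 0 ε.toNNReal
  have htail : Antitone fun a => ν.real (Ici a) := fun a b hab =>
    measureReal_mono (Ici_subset_Ici.2 hab)
  have hν : Integrable (fun y => y) ν :=
    memLp_one_iff_integrable.1 (memLp_id_gaussianReal 1)
  constructor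
  · exact tendsto_mul_integral_sub_comp_add_atTop π hπ hmom (pker_nonneg ε) (pker_le_inv_sqrt ε)
      (antitoneOn_pker hε.le) (tendsto_mul_pker_atTop hε)
  · simp_rw [integral_Ici_integral_Gker hε π]
    exact tendsto_mul_integral_sub_comp_add_atTop (h := fun a => ν.real (Ici a)) π hπ hmom
      (fun _ => measureReal_nonneg) (fun _ => measureReal_le_one) (htail.antitoneOn _)
      (tendsto_mul_measureReal_Ici_atTop ν hν)
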